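/- Bäcklund transformation theorem: in the bounded vessel setting, let λ ∈ ℂ be such that λ·I − A is invertible, and let u : ℝ → ℂ² be differentiable with λ σ₂ u(x) − σ₁ u'(x) + γ u(x) = 0 for all x. Define S(λ,x) := I − C(x)∘X(x)⁻¹∘(λ·I − A)⁻¹∘B(x)∘σ₁ and y(x) := S(λ,x) u(x). Then y is differentiable and λ σ₂ y(x) − σ₁ y'(x) + γ*(x) y(x) = 0 for all x ∈ ℝ. -/

import Mathlib

/-!
Differentiating `S = I - C X⁻¹ (λI - A)⁻¹ B σ₁` with `(X⁻¹)' = -X⁻¹ X' X⁻¹`, and eliminating `A_ζ`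
by the Lyapunov equation and `A` by the resolvent identities `A R = R A = λR - I`, shows that the
transfer function itself solves the operator equation
`S' = σ₁⁻¹ (λσ₂ + γ*) S - S σ₁⁻¹ (λσ₂ + γ)`.
Applied to `u`, whose equation says `u' = σ₁⁻¹ (λσ₂ + γ) u`, the last term is `-S u'` and cancels
in `(S u)' = S' u + S u'`.
-/

open ContinuousLinearMap

/-- The linkage matrix `γ*(x) = γ + σ₂ C X⁻¹ B σ₁ - σ₁ C X⁻¹ B σ₂`. -/
noncomputable def gammaStar {H : Type*} [NormedAddCommGroup H] [NormedSpace ℂ H]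
    (σ₁ σ₂ γ : (Fin 2 → ℂ) →L[ℂ] (Fin 2 → ℂ))
    (B : ℝ → ((Fin 2 → ℂ) →L[ℂ] H)) (C : ℝ → (H →L[ℂ] (Fin 2 → ℂ)))
    (Xinv : ℝ → (H →L[ℂ] H)) (x : ℝ) : (Fin 2 → ℂ) →L[ℂ] (Fin 2 → ℂ) :=
  γ + σ₂ ∘L (((C x ∘L Xinv x) ∘L B x) ∘L σ₁) - σ₁ ∘L (((C x ∘L Xinv x) ∘L B x) ∘L σ₂)

/-- The transfer function `S(λ, x) = I - C(x) X(x)⁻¹ (λI - A)⁻¹ B(x) σ₁`,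
with `R = (λI - A)⁻¹`. -/
noncomputable def transferS {H : Type*} [NormedAddCommGroup H] [NormedSpace ℂ H]
    (σ₁ : (Fin 2 → ℂ) →L[ℂ] (Fin 2 → ℂ))
    (B : ℝ → ((Fin 2 → ℂ) →L[ℂ] H)) (C : ℝ → (H →L[ℂ] (Fin 2 → ℂ)))
    (Xinv : ℝ → (H →L[ℂ] H)) (R : H →L[ℂ] H) (x : ℝ) :
    (Fin 2 → ℂ) →L[ℂ] (Fin 2 → ℂ) :=
  1 - C x ∘L (Xinv x ∘L (R ∘L (B x ∘L σ₁)))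

theorem ContinuousLinearMap.apply_apply_of_comp_eq_one {R E F : Type*} [Semiring R]
    [AddCommMonoid E] [Module R E] [TopologicalSpace E] [AddCommMonoid F] [Module R F]
    [TopologicalSpace F] {f : F →L[R] E} {g : E →L[R] F} (h : f ∘L g = 1) (x : E) :
    f (g x) = x :=
  congr($h x)

section ScalarTower

variable {𝕜 𝕜' : Type*} [NontriviallyNormedField 𝕜] [NontriviallyNormedField 𝕜']
  [NormedAlgebra 𝕜 𝕜']
  {E F G : Type*} [NormedAddCommGroup E] [NormedSpace 𝕜' E]
  [NormedAddCommGroup F] [NormedSpace 𝕜 F] [NormedSpace 𝕜' F] [IsScalarTower 𝕜 𝕜' F]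
  [NormedAddCommGroup G] [NormedSpace 𝕜 G] [NormedSpace 𝕜' G] [IsScalarTower 𝕜 𝕜' G]
  {x : 𝕜}

theorem HasDerivAt.clm_apply_of_isScalarTower [NormedSpace 𝕜 E] [IsScalarTower 𝕜 𝕜' E]
    {c : 𝕜 → E →L[𝕜'] F} {c' : E →L[𝕜'] F} {u : 𝕜 → E} {u' : E}
    (hc : HasDerivAt c c' x) (hu : HasDerivAt u u' x) :
    HasDerivAt (fun z => c z (u z)) (c' (u x) + c x u') x :=
  ((restrictScalarsL 𝕜' E F 𝕜 𝕜).hasFDerivAt.comp_hasDerivAt x hc).clm_apply hu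

theorem HasDerivAt.clm_comp_of_isScalarTower {c : 𝕜 → F →L[𝕜'] G} {c' : F →L[𝕜'] G}
    {d : 𝕜 → E →L[𝕜'] F} {d' : E →L[𝕜'] F} (hc : HasDerivAt c c' x) (hd : HasDerivAt d d' x) :
    HasDerivAt (fun z => c z ∘L d z) (c' ∘L d x + c x ∘L d') x := by
  let compR : (F →L[𝕜'] G) →L[𝕜] (E →L[𝕜'] F) →L[𝕜] E →L[𝕜'] G :=
    (restrictScalarsL 𝕜' (E →L[𝕜'] F) (E →L[𝕜'] G) 𝕜 𝕜).comp ((compL 𝕜' E F G).restrictScalars 𝕜)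
  simpa [compR, add_comm] using compR.hasDerivAt_of_bilinear (fun _ => hc) (fun _ => hd)

end ScalarTower

theorem HasDerivAt.inverse_of_mul_eq_one {𝕜 R : Type*} [NontriviallyNormedField 𝕜] [NormedRing R]
    [NormedAlgebra 𝕜 R] [HasSummableGeomSeries R] {f g : 𝕜 → R} {f' : R} {x : 𝕜}
    (hfg : ∀ z, f z * g z = 1) (hgf : ∀ z, g z * f z = 1) (hf : HasDerivAt f f' x) :
    HasDerivAt g (-(g x * f' * g x)) x := by
  let fx : Rˣ := ⟨f x, g x, hfg x, hgf x⟩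
  have hg : g = fun z => Ring.inverse (f z) := funext fun z =>
    (Ring.inverse_unit ⟨f z, g z, hfg z, hgf z⟩).symm
  have h := (hasFDerivAt_ringInverse (𝕜 := 𝕜) fx).comp_hasDerivAt x hf
  rw [Function.comp_def, ← hg] at h
  simpa [fx] using h

local notation "ℂ²" => Fin 2 → ℂ

section Vessel

variable {H : Type*} [NormedAddCommGroup H] [NormedSpace ℂ H]
  {σ₁ σ₁inv σ₂ γ : ℂ² →L[ℂ] ℂ²} {A Aζ : H →L[ℂ] H} {B : ℝ → ℂ² →L[ℂ] H} {C : ℝ → H →L[ℂ] ℂ²}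
  {X Xinv : ℝ → H →L[ℂ] H} {l : ℂ} {R : H →L[ℂ] H} {x : ℝ}

theorem hasDerivAt_transferS {B' : ℂ² →L[ℂ] H} {C' : H →L[ℂ] ℂ²} {Xinv' : H →L[ℂ] H}
    (hB : HasDerivAt B B' x) (hC : HasDerivAt C C' x) (hXinv : HasDerivAt Xinv Xinv' x) :
    HasDerivAt (transferS σ₁ B C Xinv R)
      (-(C' ∘L (Xinv x ∘L (R ∘L (B x ∘L σ₁))) + C x ∘L (Xinv' ∘L (R ∘L (B x ∘L σ₁)))
        + C x ∘L (Xinv x ∘L (R ∘L (B' ∘L σ₁))))) x := by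
  have hS := (hasDerivAt_const x (1 : ℂ² →L[ℂ] ℂ²)).sub <| hC.clm_comp_of_isScalarTower <|
    hXinv.clm_comp_of_isScalarTower <| (hasDerivAt_const x R).clm_comp_of_isScalarTower <|
      hB.clm_comp_of_isScalarTower (hasDerivAt_const x σ₁)
  refine hS.congr_deriv ?_
  simp only [zero_comp, comp_zero, add_zero, zero_add, zero_sub, comp_add]
  abel

theorem hasDerivAt_transferS_of_vessel [CompleteSpace H]
    (hσ₁ : σ₁ ∘L σ₁inv = 1) (hσ₁inv : σ₁inv ∘L σ₁ = 1)
    (hXinv : ∀ z, X z ∘L Xinv z = 1) (hXinv' : ∀ z, Xinv z ∘L X z = 1)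
    (hB : HasDerivAt B ((-((A ∘L B x) ∘L σ₂ + B x ∘L γ)) ∘L σ₁inv) x)
    (hC : HasDerivAt C (σ₁inv ∘L (-(σ₂ ∘L (C x ∘L Aζ)) + γ ∘L C x)) x)
    (hX : HasDerivAt X ((B x ∘L σ₂) ∘L C x) x)
    (hLyap : A ∘L X x + X x ∘L Aζ + (B x ∘L σ₁) ∘L C x = 0)
    (hR : (l • (1 : H →L[ℂ] H) - A) ∘L R = 1) (hR' : R ∘L (l • (1 : H →L[ℂ] H) - A) = 1) :
    HasDerivAt (transferS σ₁ B C Xinv R)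
      (σ₁inv ∘L ((l • σ₂ + gammaStar σ₁ σ₂ γ B C Xinv x) ∘L transferS σ₁ B C Xinv R x)
        - transferS σ₁ B C Xinv R x ∘L (σ₁inv ∘L (l • σ₂ + γ))) x := by
  have hAR (h) : A (R h) = l • R h - h := by
    have := congr($hR h)
    simp only [comp_apply, sub_apply, smul_apply, one_apply_eq_self] at this
    linear_combination (norm := module) -this
  have hRA (h) : R (A h) = l • R h - h := by
    have := congr($hR' h)
    simp only [comp_apply, sub_apply, smul_apply, one_apply_eq_self, map_sub, map_smul] at this
    linear_combination (norm := module) -this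
  have hAζ (h) : Aζ (Xinv x h) = -(Xinv x (A h) + Xinv x (B x (σ₁ (C x (Xinv x h))))) := by
    have := congr(Xinv x ($hLyap (Xinv x h)))
    simp only [add_apply, comp_apply, zero_apply, map_add, map_zero,
      apply_apply_of_comp_eq_one (hXinv x), apply_apply_of_comp_eq_one (hXinv' x)] at this
    linear_combination (norm := module) this
  refine (hasDerivAt_transferS hB hC (hX.inverse_of_mul_eq_one hXinv hXinv')).congr_deriv ?_
  ext w : 1
  simp only [transferS, gammaStar, sub_apply, add_apply, one_apply_eq_self, comp_apply,
      neg_apply, smul_apply, mul_apply_eq_comp, map_add, map_sub, map_neg, map_smul, smul_sub,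
      apply_apply_of_comp_eq_one hσ₁, apply_apply_of_comp_eq_one hσ₁inv, hRA, hAR, hAζ,
      neg_add, neg_neg, neg_sub]
  module

end Vessel

/-- **Bäcklund transformation theorem.**  If `u` solves the input ODE
`λ σ₂ u - σ₁ u' + γ u = 0`, then `y = S(λ,·) u` is differentiable and solves the
output ODE `λ σ₂ y - σ₁ y' + γ* y = 0`. -/
theorem backlund_transformation
    {H : Type*} [NormedAddCommGroup H] [InnerProductSpace ℂ H] [CompleteSpace H]
    (σ₁ σ₁inv σ₂ γ : (Fin 2 → ℂ) →L[ℂ] (Fin 2 → ℂ))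
    (hσ₁ : σ₁ ∘L σ₁inv = 1) (hσ₁inv : σ₁inv ∘L σ₁ = 1)
    (A Aζ : H →L[ℂ] H)
    (B : ℝ → ((Fin 2 → ℂ) →L[ℂ] H))
    (C : ℝ → (H →L[ℂ] (Fin 2 → ℂ)))
    (X Xinv : ℝ → (H →L[ℂ] H))
    (hXinv : ∀ x : ℝ, X x ∘L Xinv x = 1) (hXinv' : ∀ x : ℝ, Xinv x ∘L X x = 1)
    (hB : ∀ x : ℝ, HasDerivAt B ((-((A ∘L B x) ∘L σ₂ + B x ∘L γ)) ∘L σ₁inv) x)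
    (hC : ∀ x : ℝ, HasDerivAt C (σ₁inv ∘L (-(σ₂ ∘L (C x ∘L Aζ)) + γ ∘L C x)) x)
    (hX : ∀ x : ℝ, HasDerivAt X ((B x ∘L σ₂) ∘L C x) x)
    (hLyap : ∀ x : ℝ, A ∘L X x + X x ∘L Aζ + (B x ∘L σ₁) ∘L C x = 0)
    (l : ℂ) (R : H →L[ℂ] H)
    (hR : (l • (1 : H →L[ℂ] H) - A) ∘L R = 1)
    (hR' : R ∘L (l • (1 : H →L[ℂ] H) - A) = 1)
    (u u' : ℝ → (Fin 2 → ℂ))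
    (hu : ∀ x : ℝ, HasDerivAt u (u' x) x)
    (hueq : ∀ x : ℝ, l • σ₂ (u x) - σ₁ (u' x) + γ (u x) = 0) :
    ∃ y' : ℝ → (Fin 2 → ℂ),
      (∀ x : ℝ, HasDerivAt (fun z => transferS σ₁ B C Xinv R z (u z)) (y' x) x) ∧
      ∀ x : ℝ,
        l • σ₂ (transferS σ₁ B C Xinv R x (u x)) - σ₁ (y' x) +
          gammaStar σ₁ σ₂ γ B C Xinv x (transferS σ₁ B C Xinv R x (u x)) = 0 := by
  have hS (x : ℝ) := hasDerivAt_transferS_of_vessel hσ₁ hσ₁inv hXinv hXinv' (hB x) (hC x) (hX x)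
    (hLyap x) hR hR'
  refine ⟨_, fun x => (hS x).clm_apply_of_isScalarTower (hu x), fun x => ?_⟩
  have hu' : σ₁inv ((l • σ₂ + γ) (u x)) = u' x := by
    have : σ₁ (u' x) = l • σ₂ (u x) + γ (u x) := by linear_combination (norm := module) -hueq x
    rw [add_apply, smul_apply, ← this, apply_apply_of_comp_eq_one hσ₁inv]
  simp only [sub_apply, comp_apply, hu']
  simp only [map_add, map_sub, apply_apply_of_comp_eq_one hσ₁, add_apply, smul_apply]
  abel
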